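/- Let r₁, r₂, m, n₁, n₂ satisfy 0 < r₁, r₂ < m, r₁ + r₂ = m, n₁ > r₁, n₂ > r₂. Let 1 < p < ∞ with p > 2, set q = p₁ = p₂ = p, and let λ = n₁/p' + n₂/p' + m/q. Then the estimate ‖∫ f₁(y₁)f₂(y₂) K(x,y₁,y₂)^{−λ} dy₁dy₂‖_{L_x^q(ℝ^m)} ≲ ‖f₁‖_{L^p}‖f₂‖_{L^p} FAILS, where K(x,y₁,y₂) = |x₁ − y_{11}| + |y_{13}| + |x₃ − y_{22}| + |y_{23}| with x = (x₁, x₃) ∈ ℝ^{r₁} × ℝ^{r₂} (so x₁ ∈ ℝ^{m−r₂} = ℝ^{r₁} is paired against y_{11} and x₃ ∈ ℝ^{m−r₁} = ℝ^{r₂} is paired against y_{22}), y₁ = (y_{11}, y_{13}) ∈ ℝ^{r₁} × ℝ^{n₁−r₁}, y₂ = (y_{22}, y_{23}) ∈ ℝ^{r₂} × ℝ^{n₂−r₂}. A counterexample is given by h = χ_{\{|x|≤1\}}, f₁(y₁) = χ_{\{|y₁|≤1/2\}} |y_{13}|^{−(n₁−r₁)/p} (log 1/|y_{13}|)^{−(1+ε)/p}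 with ε > 0 small enough that p'(1+ε)/p < 1. -/

import Mathlib

open MeasureTheory ENNReal

abbrev E (n : ℕ) : Type := EuclideanSpace ℝ (Fin n)

namespace Stmt19

/-- The weight profile. -/
noncomputable def w (e : ℕ) (p s : ℝ) : ℝ :=
  s ^ (-(e : ℝ)/p) * (-Real.log s) ^ (-(1/2 : ℝ))

/-- The counterexample function. -/
noncomputable def f (d e : ℕ) (p : ℝ) : E d × E e → ℝ :=
  fun y => if ‖y.1‖ ≤ 1 ∧ ‖y.2‖ ≤ 1/2 then w e p ‖y.2‖ else 0

lemma f_nonneg (d e : ℕ) (p : ℝ) (y : E d × E e) : 0 ≤ f d e p y := by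
  unfold f w
  split_ifs with h
  · have h1 : (0:ℝ) ≤ ‖y.2‖ := norm_nonneg _
    have h2 : Real.log ‖y.2‖ ≤ 0 := Real.log_nonpos h1 (by linarith [h.2])
    exact mul_nonneg (Real.rpow_nonneg h1 _) (Real.rpow_nonneg (by linarith) _)
  · exact le_refl 0

lemma f_measurable (d e : ℕ) (p : ℝ) : Measurable (f d e p) := by
  unfold f w
  have h2 : Measurable fun y : E d × E e => ‖y.2‖ := measurable_snd.norm
  refine Measurable.ite ?_ ?_ measurable_const
  · exact (measurableSet_le measurable_fst.norm measurable_const).inter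
      (measurableSet_le h2 measurable_const)
  · exact (h2.pow measurable_const).mul (((Real.measurable_log.comp h2).neg).pow measurable_const)

/-- shell existence -/
lemma exists_shell {s : ℝ} (hs : 0 < s) (hs' : s ≤ 1/2) :
    ∃ k : ℕ, (1/2 : ℝ)^(k+2) < s ∧ s ≤ (1/2)^(k+1) := by
  have hex : ∃ n : ℕ, (1/2 : ℝ)^(n+2) < s := by
    obtain ⟨n, hn⟩ := exists_pow_lt_of_lt_one hs (by norm_num : (1/2:ℝ) < 1)
    exact ⟨n, lt_of_le_of_lt (pow_le_pow_of_le_one (by norm_num) (by norm_num) (by omega)) hn⟩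
  refine ⟨Nat.find hex, Nat.find_spec hex, ?_⟩
  rcases Nat.eq_zero_or_pos (Nat.find hex) with h | h
  · rw [h]; simpa using hs'
  · have := Nat.find_min hex (m := Nat.find hex - 1) (by omega)
    push_neg at this
    calc s ≤ (1/2:ℝ)^(Nat.find hex - 1 + 2) := this
    _ = (1/2:ℝ)^(Nat.find hex + 1) := by congr 1; omega


lemma neg_div_nonpos (e : ℕ) {p : ℝ} (hp : 0 < p) : -(e:ℝ)/p ≤ 0 := by
  apply div_nonpos_of_nonpos_of_nonneg <;> [simp; linarith]

lemma neg_log_lb {k : ℕ} {s : ℝ} (h2 : s ≤ (1/2:ℝ)^(k+1)) (hs : 0 < s) :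
    ((k:ℝ)+1) * Real.log 2 ≤ -Real.log s := by
  have h := Real.log_le_log hs h2
  rw [Real.log_pow, one_div, Real.log_inv] at h
  push_cast at h
  linarith

lemma neg_log_ub {k : ℕ} {s : ℝ} (h1 : (1/2:ℝ)^(k+2) < s) :
    -Real.log s ≤ ((k:ℝ)+2) * Real.log 2 := by
  have hq : (0:ℝ) < (1/2:ℝ)^(k+2) := by positivity
  have h := Real.log_le_log hq h1.le
  rw [Real.log_pow, one_div, Real.log_inv] at h
  push_cast at h
  linarith

lemma neg_log_pos {k : ℕ} {s : ℝ} (h2 : s ≤ (1/2:ℝ)^(k+1)) (hs : 0 < s) :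
    0 < -Real.log s := by
  have := neg_log_lb h2 hs
  have hl2 : 0 < Real.log 2 := Real.log_pos one_lt_two
  nlinarith

lemma w_le (e : ℕ) {p : ℝ} (hp : 0 < p) {k : ℕ} {s : ℝ}
    (h1 : (1/2:ℝ)^(k+2) < s) (h2 : s ≤ (1/2)^(k+1)) :
    w e p s ≤ ((1/2:ℝ)^(k+2)) ^ (-(e:ℝ)/p) * (((k:ℝ)+1) * Real.log 2) ^ (-(1/2:ℝ)) := by
  have hq : (0:ℝ) < (1/2:ℝ)^(k+2) := by positivity
  have hs : 0 < s := lt_trans hq h1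
  have hl2 : 0 < Real.log 2 := Real.log_pos one_lt_two
  have hkl : (0:ℝ) < ((k:ℝ)+1) * Real.log 2 := by positivity
  refine mul_le_mul ?_ ?_ (Real.rpow_nonneg (by linarith [neg_log_pos h2 hs]) _)
    (Real.rpow_nonneg hq.le _)
  · exact Real.rpow_le_rpow_of_nonpos hq h1.le (neg_div_nonpos e hp)
  · exact Real.rpow_le_rpow_of_nonpos hkl (neg_log_lb h2 hs) (by norm_num)

lemma w_ge (e : ℕ) {p : ℝ} (hp : 0 < p) {k : ℕ} {s : ℝ}
    (h1 : (1/2:ℝ)^(k+2) < s) (h2 : s ≤ (1/2)^(k+1)) :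
    ((1/2:ℝ)^(k+1)) ^ (-(e:ℝ)/p) * (((k:ℝ)+2) * Real.log 2) ^ (-(1/2:ℝ)) ≤ w e p s := by
  have hq : (0:ℝ) < (1/2:ℝ)^(k+2) := by positivity
  have hs : 0 < s := lt_trans hq h1
  have hls : 0 < -Real.log s := neg_log_pos h2 hs
  refine mul_le_mul ?_ ?_ (Real.rpow_nonneg (by positivity) _) (Real.rpow_nonneg hs.le _)
  · exact Real.rpow_le_rpow_of_nonpos hs h2 (neg_div_nonpos e hp)
  · exact Real.rpow_le_rpow_of_nonpos hls (neg_log_ub h1) (by norm_num)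

/-- Dyadic annulus in `E e`. -/
def Ann (e k : ℕ) : Set (E e) := {z | ‖z‖ ∈ Set.Ioc ((1/2:ℝ)^(k+2)) ((1/2:ℝ)^(k+1))}

lemma ann_measurable (e k : ℕ) : MeasurableSet (Ann e k) :=
  measurable_norm measurableSet_Ioc

lemma vol_closedBall (d : ℕ) (x : E d) {r : ℝ} (hr : 0 ≤ r) :
    volume (Metric.closedBall x r) =
      ENNReal.ofReal (r ^ d) * volume (Metric.ball (0 : E d) 1) := by
  rw [Measure.addHaar_closedBall _ x hr, finrank_euclideanSpace_fin]

lemma ann_vol_le (e k : ℕ) :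
    volume (Ann e k) ≤ ENNReal.ofReal (((1/2:ℝ)^(k+1))^e) * volume (Metric.ball (0:E e) 1) := by
  rw [← vol_closedBall e 0 (by positivity)]
  apply measure_mono
  intro z hz
  simp only [Ann, Set.mem_setOf_eq, Set.mem_Ioc] at hz
  simpa [Metric.mem_closedBall, dist_zero_right] using hz.2

lemma ball_subset_ann (e k : ℕ) (he : 0 < e) :
    Metric.closedBall (EuclideanSpace.single (⟨0, he⟩ : Fin e) (3*(1/2:ℝ)^(k+3)))
      ((1/2:ℝ)^(k+4)) ⊆ Ann e k := by
  intro z hz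
  set q : ℝ := (1/2:ℝ)^(k+4) with hqdef
  have hq : 0 < q := by positivity
  have hq4 : q = (1/2:ℝ)^(k+1) * (1/2:ℝ)^3 := by rw [hqdef, ← pow_add]
  have e2 : (1/2:ℝ)^(k+2) = 4 * q := by
    rw [hq4, show k+2 = (k+1)+1 by ring, pow_add]; ring
  have e3 : (1/2:ℝ)^(k+3) = 2 * q := by
    rw [hq4, show k+3 = (k+1)+2 by ring, pow_add]; ring
  have e1 : (1/2:ℝ)^(k+1) = 8 * q := by rw [hq4]; ring
  rw [Metric.mem_closedBall, dist_eq_norm] at hz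
  have hn0 : ‖EuclideanSpace.single (⟨0, he⟩ : Fin e) (3*(1/2:ℝ)^(k+3))‖ = 6 * q := by
    rw [EuclideanSpace.norm_single, e3, Real.norm_eq_abs,
      abs_of_nonneg (show (0:ℝ) ≤ 3*(2*q) by positivity)]
    ring
  have habs := abs_norm_sub_norm_le z (EuclideanSpace.single (⟨0, he⟩ : Fin e) (3*(1/2:ℝ)^(k+3)))
  rw [hn0] at habs
  rw [abs_le] at habs
  constructor
  · rw [e2]; linarith [habs.1, hz]
  · rw [e1]; linarith [habs.2, hz]

lemma ann_vol_ge (e k : ℕ) (he : 0 < e) :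
    ENNReal.ofReal (((1/2:ℝ)^(k+4))^e) * volume (Metric.ball (0:E e) 1) ≤ volume (Ann e k) := by
  rw [← vol_closedBall e (EuclideanSpace.single (⟨0, he⟩ : Fin e) (3*(1/2:ℝ)^(k+3)))
    (by positivity : (0:ℝ) ≤ (1/2:ℝ)^(k+4))]
  exact measure_mono (ball_subset_ann e k he)

lemma ann_disjoint (e : ℕ) : Pairwise (Function.onFun Disjoint (Ann e)) := by
  have key : ∀ k j : ℕ, k < j → Disjoint (Ann e k) (Ann e j) := by
    intro k j h
    rw [Set.disjoint_left]
    intro z hzk hzj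
    simp only [Ann, Set.mem_setOf_eq, Set.mem_Ioc] at hzk hzj
    have h2 : (1/2:ℝ)^(j+1) ≤ (1/2:ℝ)^(k+2) :=
      pow_le_pow_of_le_one (by norm_num) (by norm_num) (by omega)
    linarith [hzk.1, hzj.2]
  intro k j hkj
  rcases hkj.lt_or_gt with h | h
  · exact key _ _ h
  · exact (key _ _ h).symm


lemma f_memLp (d e : ℕ) (he : 0 < e) {p : ℝ} (hp : 2 < p) :
    MemLp (f d e p) (ENNReal.ofReal p) volume := by
  have hp0 : (0:ℝ) < p := by linarith
  have hL : 0 < Real.log 2 := Real.log_pos one_lt_two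
  refine ⟨(f_measurable d e p).aestronglyMeasurable, ?_⟩
  rw [eLpNorm_eq_lintegral_rpow_enorm_toReal
    (by simp only [ne_eq, ENNReal.ofReal_eq_zero, not_le]; linarith) ofReal_ne_top,
    ENNReal.toReal_ofReal hp0.le]
  refine ENNReal.rpow_lt_top_of_nonneg (by positivity) ?_
  rw [← lt_top_iff_ne_top]
  -- the shells
  set A : ℕ → Set (E d × E e) := fun k => (Metric.closedBall (0:E d) 1) ×ˢ Ann e k with hA
  have hAmeas : ∀ k, MeasurableSet (A k) := fun k =>
    measurableSet_closedBall.prod (ann_measurable e k)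
  set W : ℕ → ℝ := fun k =>
    ((1/2:ℝ)^(k+2)) ^ (-(e:ℝ)/p) * (((k:ℝ)+1) * Real.log 2) ^ (-(1/2:ℝ)) with hW
  have hWpos : ∀ k, 0 < W k := fun k => by
    apply mul_pos (Real.rpow_pos_of_pos (by positivity) _) (Real.rpow_pos_of_pos (by positivity) _)
  set B : ℕ → ℝ≥0∞ := fun k => ENNReal.ofReal ((W k) ^ p) with hB
  -- pointwise domination
  have hpoint : ∀ y : E d × E e,
      ‖f d e p y‖ₑ ^ p ≤ ∑' k, (A k).indicator (fun _ => B k) y := by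
    intro y
    rw [Real.enorm_eq_ofReal (f_nonneg d e p y)]
    by_cases hy : ∃ k, y ∈ A k
    · obtain ⟨k, hk⟩ := hy
      have hk' : ‖y.1‖ ≤ 1 ∧ (1/2:ℝ)^(k+2) < ‖y.2‖ ∧ ‖y.2‖ ≤ (1/2:ℝ)^(k+1) := by
        obtain ⟨hk1, hk2⟩ := hk
        exact ⟨by simpa [Metric.mem_closedBall, dist_zero_right] using hk1, hk2.1, hk2.2⟩
      have hcond : ‖y.1‖ ≤ 1 ∧ ‖y.2‖ ≤ 1/2 := by
        refine ⟨hk'.1, le_trans hk'.2.2 ?_⟩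
        calc (1/2:ℝ)^(k+1) ≤ (1/2:ℝ)^1 :=
          pow_le_pow_of_le_one (by norm_num) (by norm_num) (by omega)
        _ = 1/2 := pow_one _
      have hfy : f d e p y = w e p ‖y.2‖ := if_pos hcond
      calc ENNReal.ofReal (f d e p y) ^ p ≤ ENNReal.ofReal (W k) ^ p := by
            refine ENNReal.rpow_le_rpow ?_ hp0.le
            exact ENNReal.ofReal_le_ofReal (by rw [hfy]; exact w_le e hp0 hk'.2.1 hk'.2.2)
        _ = B k := by simp only [hB]; exact ENNReal.ofReal_rpow_of_pos (hWpos k)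
        _ = (A k).indicator (fun _ => B k) y := (Set.indicator_of_mem hk fun _ => B k).symm
        _ ≤ ∑' j, (A j).indicator (fun _ => B j) y := ENNReal.le_tsum k
    · have hfy : f d e p y = 0 := by
        unfold f
        split_ifs with hcond
        · rcases eq_or_lt_of_le (norm_nonneg y.2) with h0 | h0
          · have hne : -(e:ℝ)/p ≠ 0 := by
              have hpos : (0:ℝ) < (e:ℝ)/p := div_pos (by exact_mod_cast he) hp0
              rw [neg_div]
              exact neg_ne_zero.mpr hpos.ne'
            rw [w, ← h0, Real.zero_rpow hne, zero_mul]
          · obtain ⟨k, hk1, hk2⟩ := exists_shell h0 hcond.2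
            exact absurd ⟨by simpa [Metric.mem_closedBall, dist_zero_right] using hcond.1,
              hk1, hk2⟩ (fun h => hy ⟨k, h⟩)
        · rfl
      rw [hfy]
      simp only [ENNReal.ofReal_zero]
      rw [ENNReal.zero_rpow_of_pos hp0]
      exact zero_le
  calc (∫⁻ y, ‖f d e p y‖ₑ ^ p ∂volume)
      ≤ ∫⁻ y, ∑' k, (A k).indicator (fun _ => B k) y ∂volume := lintegral_mono hpoint
    _ = ∑' k, ∫⁻ y, (A k).indicator (fun _ => B k) y ∂volume :=
        lintegral_tsum fun k => (measurable_const.indicator (hAmeas k)).aemeasurable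
    _ = ∑' k, B k * volume (A k) := by
        refine tsum_congr fun k => ?_
        rw [lintegral_indicator_const (hAmeas k)]
    _ ≤ ∑' k, (volume (Metric.ball (0:E d) 1) * volume (Metric.ball (0:E e) 1)) *
          ENNReal.ofReal ((W k)^p * ((1/2:ℝ)^(k+1))^e) := by
        refine ENNReal.tsum_le_tsum fun k => ?_
        have hvol : volume (A k) ≤ volume (Metric.ball (0:E d) 1) *
            (ENNReal.ofReal (((1/2:ℝ)^(k+1))^e) * volume (Metric.ball (0:E e) 1)) := by
          rw [hA]
          simp only
          rw [Measure.volume_eq_prod, Measure.prod_prod]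
          have h1 : volume (Metric.closedBall (0:E d) 1) = volume (Metric.ball (0:E d) 1) := by
            rw [vol_closedBall d 0 zero_le_one]; simp
          rw [h1]
          exact mul_le_mul_right (ann_vol_le e k) _
        calc B k * volume (A k) ≤ B k * (volume (Metric.ball (0:E d) 1) *
              (ENNReal.ofReal (((1/2:ℝ)^(k+1))^e) * volume (Metric.ball (0:E e) 1))) :=
              mul_le_mul_right hvol _
          _ = (volume (Metric.ball (0:E d) 1) * volume (Metric.ball (0:E e) 1)) *
              (B k * ENNReal.ofReal (((1/2:ℝ)^(k+1))^e)) := by ring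
          _ = (volume (Metric.ball (0:E d) 1) * volume (Metric.ball (0:E e) 1)) *
              ENNReal.ofReal ((W k)^p * ((1/2:ℝ)^(k+1))^e) := by
              rw [hB, ← ENNReal.ofReal_mul (by positivity)]
    _ < ⊤ := by
        rw [ENNReal.tsum_mul_left]
        refine ENNReal.mul_lt_top (ENNReal.mul_lt_top measure_ball_lt_top measure_ball_lt_top) ?_
        have hkey : ∀ k : ℕ, (W k)^p * ((1/2:ℝ)^(k+1))^e =
            (2:ℝ)^(e:ℝ) * (Real.log 2)^(-(p/2)) * ((k:ℝ)+1)^(-(p/2)) := by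
          intro k
          have hlo : (0:ℝ) < (1/2:ℝ)^(k+2) := by positivity
          have hhi : (0:ℝ) < (1/2:ℝ)^(k+1) := by positivity
          have hL2 : (0:ℝ) < ((k:ℝ)+1) * Real.log 2 := by positivity
          have h1 : (W k)^p = ((1/2:ℝ)^(k+2)) ^ (-(e:ℝ)) *
              (((k:ℝ)+1) * Real.log 2) ^ (-(p/2)) := by
            rw [hW]
            simp only
            rw [Real.mul_rpow (Real.rpow_nonneg hlo.le _) (Real.rpow_nonneg hL2.le _),
              ← Real.rpow_mul hlo.le, ← Real.rpow_mul hL2.le,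
              show -(e:ℝ)/p * p = -(e:ℝ) by field_simp,
              show (-(1/2:ℝ)) * p = -(p/2) by ring]
          have h2 : (((1/2:ℝ)^(k+1)) : ℝ)^e = ((1/2:ℝ)^(k+1)) ^ ((e:ℝ)) :=
            (Real.rpow_natCast _ e).symm
          have hloeq : ((1/2:ℝ)^(k+2)) = ((1/2:ℝ)^(k+1)) * 2⁻¹ := by
            rw [pow_succ]; norm_num
          have hlopow : ((1/2:ℝ)^(k+2)) ^ (-(e:ℝ)) =
              ((1/2:ℝ)^(k+1)) ^ (-(e:ℝ)) * (2:ℝ)^((e:ℝ)) := by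
            rw [hloeq, Real.mul_rpow hhi.le (by norm_num),
              Real.inv_rpow (by norm_num : (0:ℝ) ≤ 2), ← Real.rpow_neg (by norm_num : (0:ℝ) ≤ 2),
              neg_neg]
          have hL2split : (((k:ℝ)+1) * Real.log 2) ^ (-(p/2)) =
              ((k:ℝ)+1)^(-(p/2)) * (Real.log 2)^(-(p/2)) :=
            Real.mul_rpow (by positivity) hL.le
          have hcancel : ((1/2:ℝ)^(k+1)) ^ (-(e:ℝ)) * ((1/2:ℝ)^(k+1)) ^ ((e:ℝ)) = 1 := by
            rw [← Real.rpow_add hhi]; simp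
          rw [h1, h2, hlopow, hL2split]
          calc ((1/2:ℝ)^(k+1)) ^ (-(e:ℝ)) * (2:ℝ)^((e:ℝ)) *
                (((k:ℝ)+1)^(-(p/2)) * (Real.log 2)^(-(p/2))) * ((1/2:ℝ)^(k+1)) ^ ((e:ℝ))
              = (((1/2:ℝ)^(k+1)) ^ (-(e:ℝ)) * ((1/2:ℝ)^(k+1)) ^ ((e:ℝ))) *
                ((2:ℝ)^((e:ℝ)) * (((k:ℝ)+1)^(-(p/2)) * (Real.log 2)^(-(p/2)))) := by ring
            _ = (2:ℝ)^(e:ℝ) * (Real.log 2)^(-(p/2)) * ((k:ℝ)+1)^(-(p/2)) := by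
                rw [hcancel]; ring
        have hsum : Summable (fun k : ℕ =>
            (2:ℝ)^(e:ℝ) * (Real.log 2)^(-(p/2)) * ((k:ℝ)+1)^(-(p/2))) := by
          have h1 : Summable (fun n : ℕ => ((n:ℝ))^(-(p/2))) :=
            Real.summable_nat_rpow.mpr (by linarith)
          have h2 := (summable_nat_add_iff 1).mpr h1
          exact Summable.mul_left _ (h2.congr (fun n => by push_cast; ring_nf))
        have : (∑' k, ENNReal.ofReal ((W k)^p * ((1/2:ℝ)^(k+1))^e)) =
            ENNReal.ofReal (∑' k : ℕ, (2:ℝ)^(e:ℝ) * (Real.log 2)^(-(p/2)) * ((k:ℝ)+1)^(-(p/2))) := by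
          rw [ENNReal.ofReal_tsum_of_nonneg (fun k => by positivity) hsum]
          exact tsum_congr fun k => by rw [hkey k]
        rw [this]
        exact ENNReal.ofReal_lt_top

/-- The harmonic-type divergence. -/
lemma tsum_ofReal_harmonic_eq_top {c : ℝ} (hc : 0 < c) :
    (∑' k : ℕ, ENNReal.ofReal (c * ((k:ℝ)+2)⁻¹)) = ⊤ := by
  by_contra h
  have hsum : Summable fun k : ℕ => (c * ((k:ℝ)+2)⁻¹).toNNReal := by
    simp only [ENNReal.ofReal] at h
    exact ENNReal.tsum_coe_ne_top_iff_summable.mp h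
  have hreal : Summable fun k : ℕ => c * ((k:ℝ)+2)⁻¹ := by
    have := NNReal.summable_coe.mpr hsum
    refine this.congr fun k => ?_
    rw [Real.coe_toNNReal _ (by positivity)]
  have h2 : Summable fun k : ℕ => ((k:ℝ)+2)⁻¹ := by
    have := hreal.mul_left c⁻¹
    refine this.congr fun k => ?_
    field_simp
  have h3 : Summable fun n : ℕ => ((n:ℝ))⁻¹ := by
    rw [← summable_nat_add_iff 2]
    refine h2.congr fun k => ?_
    push_cast
    ring_nf
  exact Real.not_summable_natCast_inv h3


lemma inner_eq_top (r₁ r₂ a b : ℕ) (hr₁ : 0 < r₁) (hr₂ : 0 < r₂) (ha : 0 < a) (hb : 0 < b)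
    {p lam : ℝ} (hp : 2 < p)
    (hlam : lam = ((r₁:ℝ) + r₂) + ((a:ℝ)+b) * (1 - 1/p))
    (x : E r₁ × E r₂) (hx1 : ‖x.1‖ ≤ 1/4) (hx2 : ‖x.2‖ ≤ 1/4) :
    (∫⁻ y₁ : E r₁ × E a, ∫⁻ y₂ : E r₂ × E b,
        ENNReal.ofReal |f r₁ a p y₁| * ENNReal.ofReal |f r₂ b p y₂| *
        ENNReal.ofReal ((‖x.1 - y₁.1‖ + ‖y₁.2‖ + ‖x.2 - y₂.1‖ + ‖y₂.2‖) ^ (-lam))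
        ∂volume ∂volume) = ⊤ := by
  have hp0 : (0:ℝ) < p := by linarith
  have hL : 0 < Real.log 2 := Real.log_pos one_lt_two
  have hlam0 : 0 ≤ lam := by
    rw [hlam]
    have h1 : (0:ℝ) < 1 - 1/p := by
      rw [sub_pos, div_lt_one hp0]; linarith
    have h2 : (0:ℝ) ≤ ((a:ℝ)+b) * (1 - 1/p) := mul_nonneg (by positivity) h1.le
    have h3 : (0:ℝ) ≤ (r₁:ℝ) + r₂ := by positivity
    linarith
  -- notation
  set t : ℕ → ℝ := fun k => (1/2:ℝ)^(k+1) with htdef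
  have ht : ∀ k, 0 < t k := fun k => by positivity
  have htk : ∀ k, t k = (1/2:ℝ)^(k+1) := fun k => rfl
  have ht12 : ∀ k, t k ≤ 1/2 := fun k => by
    rw [htk]
    calc (1/2:ℝ)^(k+1) ≤ (1/2:ℝ)^1 :=
      pow_le_pow_of_le_one (by norm_num) (by norm_num) (by omega)
    _ = 1/2 := pow_one _
  set W₁ : ℕ → ℝ := fun k => (t k) ^ (-(a:ℝ)/p) * (((k:ℝ)+2) * Real.log 2) ^ (-(1/2:ℝ)) with hW₁
  set W₂ : ℕ → ℝ := fun k => (t k) ^ (-(b:ℝ)/p) * (((k:ℝ)+2) * Real.log 2) ^ (-(1/2:ℝ)) with hW₂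
  set KB : ℕ → ℝ := fun k => (4 * t k) ^ (-lam) with hKB
  set P₁ : ℕ → Set (E r₁ × E a) := fun k => Metric.closedBall x.1 (t k) ×ˢ Ann a k with hP₁
  set P₂ : ℕ → Set (E r₂ × E b) := fun k => Metric.closedBall x.2 (t k) ×ˢ Ann b k with hP₂
  have hP₁meas : ∀ k, MeasurableSet (P₁ k) := fun k =>
    measurableSet_closedBall.prod (ann_measurable a k)
  have hP₂meas : ∀ k, MeasurableSet (P₂ k) := fun k =>
    measurableSet_closedBall.prod (ann_measurable b k)
  have hP₁disj : Pairwise (Function.onFun Disjoint P₁) := fun k j hkj =>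
    Set.disjoint_left.mpr fun y hyk hyj =>
      Set.disjoint_left.mp (ann_disjoint a hkj) hyk.2 hyj.2
  set c : ℕ → ℝ≥0∞ := fun k =>
    ENNReal.ofReal (W₁ k) * ENNReal.ofReal (W₂ k) * ENNReal.ofReal (KB k) with hc
  -- Step A: pointwise lower bound on the integrand
  have stepA : ∀ k : ℕ, ∀ y₁ ∈ P₁ k, ∀ y₂ ∈ P₂ k,
      c k ≤ ENNReal.ofReal |f r₁ a p y₁| * ENNReal.ofReal |f r₂ b p y₂| *
        ENNReal.ofReal ((‖x.1 - y₁.1‖ + ‖y₁.2‖ + ‖x.2 - y₂.1‖ + ‖y₂.2‖) ^ (-lam)) := by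
    intro k y₁ hy₁ y₂ hy₂
    simp only [hP₁, hP₂, Set.mem_prod, Metric.mem_closedBall, Ann, Set.mem_setOf_eq,
      Set.mem_Ioc] at hy₁ hy₂
    have hy₁1 := hy₁.1
    have hy₁2a := hy₁.2.1
    have hy₁2b := hy₁.2.2
    have hy₂1 := hy₂.1
    have hy₂2a := hy₂.2.1
    have hy₂2b := hy₂.2.2
    have hd₁ : ‖x.1 - y₁.1‖ ≤ t k := by
      rw [← dist_eq_norm, dist_comm]; exact hy₁1
    have hd₂ : ‖x.2 - y₂.1‖ ≤ t k := by
      rw [← dist_eq_norm, dist_comm]; exact hy₂1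
    have hf₁ : W₁ k ≤ |f r₁ a p y₁| := by
      rw [abs_of_nonneg (f_nonneg _ _ _ _)]
      have hn : ‖y₁.1‖ ≤ 1 := by
        have h := norm_sub_norm_le y₁.1 x.1
        rw [← dist_eq_norm] at h
        have := ht12 k
        linarith [hy₁1, hx1]
      have hcond : ‖y₁.1‖ ≤ 1 ∧ ‖y₁.2‖ ≤ 1/2 := ⟨hn, le_trans hy₁2b (ht12 k)⟩
      show W₁ k ≤ f r₁ a p y₁
      simp only [f, if_pos hcond]
      simpa [hW₁, htk] using w_ge a hp0 hy₁2a hy₁2b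
    have hf₂ : W₂ k ≤ |f r₂ b p y₂| := by
      rw [abs_of_nonneg (f_nonneg _ _ _ _)]
      have hn : ‖y₂.1‖ ≤ 1 := by
        have h := norm_sub_norm_le y₂.1 x.2
        rw [← dist_eq_norm] at h
        have := ht12 k
        linarith [hy₂1, hx2]
      have hcond : ‖y₂.1‖ ≤ 1 ∧ ‖y₂.2‖ ≤ 1/2 := ⟨hn, le_trans hy₂2b (ht12 k)⟩
      show W₂ k ≤ f r₂ b p y₂
      simp only [f, if_pos hcond]
      simpa [hW₂, htk] using w_ge b hp0 hy₂2a hy₂2b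
    have hker : KB k ≤ (‖x.1 - y₁.1‖ + ‖y₁.2‖ + ‖x.2 - y₂.1‖ + ‖y₂.2‖) ^ (-lam) := by
      have h0 : (0:ℝ) < ‖y₁.2‖ := lt_trans (by positivity) hy₁2a
      have hpos : 0 < ‖x.1 - y₁.1‖ + ‖y₁.2‖ + ‖x.2 - y₂.1‖ + ‖y₂.2‖ := by
        have h1 := norm_nonneg (x.1 - y₁.1)
        have h2 := norm_nonneg (x.2 - y₂.1)
        have h3 := norm_nonneg y₂.2
        linarith
      have hle : ‖x.1 - y₁.1‖ + ‖y₁.2‖ + ‖x.2 - y₂.1‖ + ‖y₂.2‖ ≤ 4 * t k := by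
        have h1 : ‖y₁.2‖ ≤ t k := hy₁2b
        have h2 : ‖y₂.2‖ ≤ t k := hy₂2b
        linarith
      exact Real.rpow_le_rpow_of_nonpos hpos hle (neg_nonpos.mpr hlam0)
    exact mul_le_mul' (mul_le_mul' (ENNReal.ofReal_le_ofReal hf₁)
      (ENNReal.ofReal_le_ofReal hf₂)) (ENNReal.ofReal_le_ofReal hker)
  -- Step B : lower bound of the inner integral, for y₁ in the shell
  have stepB : ∀ k : ℕ, ∀ y₁ ∈ P₁ k,
      c k * volume (P₂ k) ≤ ∫⁻ y₂ : E r₂ × E b,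
        ENNReal.ofReal |f r₁ a p y₁| * ENNReal.ofReal |f r₂ b p y₂| *
        ENNReal.ofReal ((‖x.1 - y₁.1‖ + ‖y₁.2‖ + ‖x.2 - y₂.1‖ + ‖y₂.2‖) ^ (-lam)) ∂volume := by
    intro k y₁ hy₁
    calc c k * volume (P₂ k) = ∫⁻ _ in P₂ k, c k ∂volume := (setLIntegral_const _ _).symm
      _ ≤ ∫⁻ y₂ in P₂ k, ENNReal.ofReal |f r₁ a p y₁| * ENNReal.ofReal |f r₂ b p y₂| *
            ENNReal.ofReal ((‖x.1 - y₁.1‖ + ‖y₁.2‖ + ‖x.2 - y₂.1‖ + ‖y₂.2‖) ^ (-lam)) ∂volume :=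
          setLIntegral_mono' (hP₂meas k) fun y₂ hy₂ => stepA k y₁ hy₁ y₂ hy₂
      _ ≤ _ := setLIntegral_le_lintegral _ _
  -- volume lower bounds
  have hv₁ : ∀ k, ENNReal.ofReal (t k ^ r₁) * volume (Metric.ball (0:E r₁) 1) *
      (ENNReal.ofReal (((1/2:ℝ)^(k+4))^a) * volume (Metric.ball (0:E a) 1)) ≤ volume (P₁ k) := by
    intro k
    rw [hP₁]
    simp only
    rw [Measure.volume_eq_prod, Measure.prod_prod, vol_closedBall r₁ x.1 (ht k).le]
    exact mul_le_mul_right (ann_vol_ge a k ha) _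
  have hv₂ : ∀ k, ENNReal.ofReal (t k ^ r₂) * volume (Metric.ball (0:E r₂) 1) *
      (ENNReal.ofReal (((1/2:ℝ)^(k+4))^b) * volume (Metric.ball (0:E b) 1)) ≤ volume (P₂ k) := by
    intro k
    rw [hP₂]
    simp only
    rw [Measure.volume_eq_prod, Measure.prod_prod, vol_closedBall r₂ x.2 (ht k).le]
    exact mul_le_mul_right (ann_vol_ge b k hb) _
  set VV : ℝ≥0∞ := volume (Metric.ball (0:E r₂) 1) * volume (Metric.ball (0:E b) 1) *
      volume (Metric.ball (0:E r₁) 1) * volume (Metric.ball (0:E a) 1) with hVV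
  have hVV0 : VV ≠ 0 := by
    rw [hVV]
    refine mul_ne_zero (mul_ne_zero (mul_ne_zero ?_ ?_) ?_) ?_ <;>
      exact (Metric.measure_ball_pos volume _ one_pos).ne'
  set G : ℕ → ℝ := fun k => W₁ k * W₂ k * KB k *
    (t k ^ r₂ * ((1/2:ℝ)^(k+4)) ^ b * (t k ^ r₁ * ((1/2:ℝ)^(k+4)) ^ a)) with hG
  -- Step D : per-shell volume-weighted bound
  have stepD : ∀ k, ENNReal.ofReal (G k) * VV ≤ (c k * volume (P₂ k)) * volume (P₁ k) := by
    intro k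
    have hWW₁ : 0 ≤ W₁ k := by
      rw [hW₁]; positivity
    have hWW₂ : 0 ≤ W₂ k := by
      rw [hW₂]; positivity
    have hKB0 : 0 ≤ KB k := by
      rw [hKB]; positivity
    have hsplit : ENNReal.ofReal (G k) = ENNReal.ofReal (W₁ k) * (ENNReal.ofReal (W₂ k) *
        (ENNReal.ofReal (KB k) * (ENNReal.ofReal (t k ^ r₂) *
        (ENNReal.ofReal (((1/2:ℝ)^(k+4))^b) * (ENNReal.ofReal (t k ^ r₁) *
        ENNReal.ofReal (((1/2:ℝ)^(k+4))^a)))))) := by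
      rw [hG]
      simp only
      rw [show W₁ k * W₂ k * KB k *
          (t k ^ r₂ * ((1/2:ℝ)^(k+4)) ^ b * (t k ^ r₁ * ((1/2:ℝ)^(k+4)) ^ a)) =
          W₁ k * (W₂ k * (KB k * (t k ^ r₂ * (((1/2:ℝ)^(k+4)) ^ b *
          (t k ^ r₁ * ((1/2:ℝ)^(k+4)) ^ a))))) from by ring]
      rw [ENNReal.ofReal_mul hWW₁, ENNReal.ofReal_mul hWW₂, ENNReal.ofReal_mul hKB0,
        ENNReal.ofReal_mul (pow_nonneg (ht k).le _),
        ENNReal.ofReal_mul (pow_nonneg (by positivity) _),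
        ENNReal.ofReal_mul (pow_nonneg (ht k).le _)]
    have heq : ENNReal.ofReal (G k) * VV =
        (c k * (ENNReal.ofReal (t k ^ r₂) * volume (Metric.ball (0:E r₂) 1) *
          (ENNReal.ofReal (((1/2:ℝ)^(k+4))^b) * volume (Metric.ball (0:E b) 1)))) *
        (ENNReal.ofReal (t k ^ r₁) * volume (Metric.ball (0:E r₁) 1) *
          (ENNReal.ofReal (((1/2:ℝ)^(k+4))^a) * volume (Metric.ball (0:E a) 1))) := by
      rw [hsplit, hc, hVV]
      ring
    rw [heq]
    exact mul_le_mul' (mul_le_mul_right (hv₂ k) _) (hv₁ k)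
  -- Step E : exact value of G k
  set c0 : ℝ := (4:ℝ)^(-lam) * ((1/8:ℝ)^b * (1/8:ℝ)^a) * (Real.log 2)⁻¹ with hc0def
  have hc0 : 0 < c0 := by rw [hc0def]; positivity
  have stepE : ∀ k, G k = c0 * ((k:ℝ)+2)⁻¹ := by
    intro k
    have hM : (0:ℝ) < ((k:ℝ)+2) * Real.log 2 := by positivity
    have hMM : (((k:ℝ)+2) * Real.log 2)^(-(1/2:ℝ)) * (((k:ℝ)+2) * Real.log 2)^(-(1/2:ℝ)) =
        ((k:ℝ)+2)⁻¹ * (Real.log 2)⁻¹ := by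
      rw [← Real.rpow_add hM, show (-(1/2:ℝ)) + (-(1/2:ℝ)) = -1 by norm_num,
        Real.rpow_neg_one, mul_inv]
    have hKB' : KB k = (4:ℝ)^(-lam) * (t k)^(-lam) :=
      Real.mul_rpow (by norm_num) (ht k).le
    have hρ : ((1/2:ℝ))^(k+4) = t k * (1/8:ℝ) := by
      rw [htk, show k+4 = (k+1)+3 by ring, pow_add]
      norm_num
    have hρb : (((1/2:ℝ))^(k+4))^b = t k ^ ((b:ℝ)) * (1/8:ℝ)^b := by
      rw [hρ, mul_pow, Real.rpow_natCast]
    have hρa : (((1/2:ℝ))^(k+4))^a = t k ^ ((a:ℝ)) * (1/8:ℝ)^a := by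
      rw [hρ, mul_pow, Real.rpow_natCast]
    have htr₂ : t k ^ r₂ = t k ^ ((r₂:ℝ)) := (Real.rpow_natCast _ r₂).symm
    have htr₁ : t k ^ r₁ = t k ^ ((r₁:ℝ)) := (Real.rpow_natCast _ r₁).symm
    have hsum0 : -(a:ℝ)/p + (-(b:ℝ)/p + (-lam + ((r₂:ℝ) + ((b:ℝ) + ((r₁:ℝ) + (a:ℝ)))))) = 0 := by
      rw [hlam]
      field_simp
      ring
    calc G k
        = (t k)^(-(a:ℝ)/p) * ((t k)^(-(b:ℝ)/p) * ((t k)^(-lam) * ((t k)^((r₂:ℝ)) *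
            ((t k)^((b:ℝ)) * ((t k)^((r₁:ℝ)) * (t k)^((a:ℝ))))))) *
          ((4:ℝ)^(-lam) * ((1/8:ℝ)^b * (1/8:ℝ)^a)) *
          ((((k:ℝ)+2) * Real.log 2)^(-(1/2:ℝ)) * (((k:ℝ)+2) * Real.log 2)^(-(1/2:ℝ))) := by
          rw [hG, hW₁, hW₂]
          simp only
          rw [hKB', hρb, hρa, htr₂, htr₁]
          ring
      _ = (t k) ^ ((-(a:ℝ)/p) + ((-(b:ℝ)/p) + ((-lam) + ((r₂:ℝ) + ((b:ℝ) + ((r₁:ℝ) + (a:ℝ))))))) *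
          ((4:ℝ)^(-lam) * ((1/8:ℝ)^b * (1/8:ℝ)^a)) *
          (((k:ℝ)+2)⁻¹ * (Real.log 2)⁻¹) := by
          rw [hMM]
          simp only [Real.rpow_add (ht k)]
      _ = c0 * ((k:ℝ)+2)⁻¹ := by
          rw [hsum0, Real.rpow_zero, hc0def]
          ring
  -- Step C/F : summing over the shells
  rw [← top_le_iff]
  calc (⊤:ℝ≥0∞) = (∑' k : ℕ, ENNReal.ofReal (c0 * ((k:ℝ)+2)⁻¹)) * VV := by
        rw [tsum_ofReal_harmonic_eq_top hc0, ENNReal.top_mul hVV0]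
    _ = ∑' k : ℕ, ENNReal.ofReal (G k) * VV := by
        rw [ENNReal.tsum_mul_right]
        congr 1
        exact tsum_congr fun k => by rw [stepE k]
    _ ≤ ∑' k : ℕ, (c k * volume (P₂ k)) * volume (P₁ k) := ENNReal.tsum_le_tsum stepD
    _ = ∑' k : ℕ, ∫⁻ _ in P₁ k, (c k * volume (P₂ k)) ∂volume :=
        tsum_congr fun k => (setLIntegral_const _ _).symm
    _ ≤ ∑' k : ℕ, ∫⁻ y₁ in P₁ k, (∫⁻ y₂ : E r₂ × E b,
          ENNReal.ofReal |f r₁ a p y₁| * ENNReal.ofReal |f r₂ b p y₂| *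
          ENNReal.ofReal ((‖x.1 - y₁.1‖ + ‖y₁.2‖ + ‖x.2 - y₂.1‖ + ‖y₂.2‖) ^ (-lam))
          ∂volume) ∂volume :=
        ENNReal.tsum_le_tsum fun k => setLIntegral_mono' (hP₁meas k) (stepB k)
    _ = ∫⁻ y₁ in ⋃ k, P₁ k, (∫⁻ y₂ : E r₂ × E b,
          ENNReal.ofReal |f r₁ a p y₁| * ENNReal.ofReal |f r₂ b p y₂| *
          ENNReal.ofReal ((‖x.1 - y₁.1‖ + ‖y₁.2‖ + ‖x.2 - y₂.1‖ + ‖y₂.2‖) ^ (-lam))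
          ∂volume) ∂volume :=
        (lintegral_iUnion hP₁meas hP₁disj _).symm
    _ ≤ _ := setLIntegral_le_lintegral _ _


end Stmt19

/-- Failure of the endpoint `q = p₁ = p₂ = p` when `p > 2`, `r₁ + r₂ = m`,
`n₁ > r₁`, `n₂ > r₂`: with `λ = n₁/p' + n₂/p' + m/p` and kernel
`K(x,y₁,y₂) = |x₁−y_{11}| + |y_{13}| + |x₃−y_{22}| + |y_{23}|`
(`x = (x₁,x₃) ∈ ℝ^{r₁} × ℝ^{r₂}`, `y₁ = (y_{11},y_{13}) ∈ ℝ^{r₁} × ℝ^{n₁−r₁}`,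
`y₂ = (y_{22},y_{23}) ∈ ℝ^{r₂} × ℝ^{n₂−r₂}`), there is no constant `C` such that
`‖∫∫ f₁f₂ K^{−λ}‖_{L^p_x} ≤ C ‖f₁‖_{L^p} ‖f₂‖_{L^p}` for all `f₁, f₂ ∈ L^p`. -/
theorem stmt19 (r₁ r₂ n₁ n₂ m : ℕ) (h₁ : 0 < r₁) (h₂ : 0 < r₂)
    (hn₁ : r₁ < n₁) (hn₂ : r₂ < n₂) (hm : m = r₁ + r₂)
    (p lam : ℝ) (hp : 2 < p)
    (hhom : lam = n₁ * (1 - 1/p) + n₂ * (1 - 1/p) + m / p) :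
    ¬ ∃ C : ℝ, ∀ (f₁ : E r₁ × E (n₁ - r₁) → ℝ) (f₂ : E r₂ × E (n₂ - r₂) → ℝ),
        MemLp f₁ (ENNReal.ofReal p) volume → MemLp f₂ (ENNReal.ofReal p) volume →
        (∫⁻ x : E r₁ × E r₂, (∫⁻ y₁ : E r₁ × E (n₁ - r₁), ∫⁻ y₂ : E r₂ × E (n₂ - r₂),
            ENNReal.ofReal |f₁ y₁| * ENNReal.ofReal |f₂ y₂| *
            ENNReal.ofReal ((‖x.1 - y₁.1‖ + ‖y₁.2‖ + ‖x.2 - y₂.1‖ + ‖y₂.2‖) ^ (-lam))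
            ∂volume ∂volume) ^ p ∂volume) ^ (1/p)
          ≤ ENNReal.ofReal C * eLpNorm f₁ (ENNReal.ofReal p) volume *
              eLpNorm f₂ (ENNReal.ofReal p) volume := by
  rintro ⟨C, hC⟩
  have hp0 : (0:ℝ) < p := by linarith
  have ha : 0 < n₁ - r₁ := by omega
  have hb : 0 < n₂ - r₂ := by omega
  have hmem₁ := Stmt19.f_memLp r₁ (n₁ - r₁) ha hp
  have hmem₂ := Stmt19.f_memLp r₂ (n₂ - r₂) hb hp
  have hineq := hC _ _ hmem₁ hmem₂
  have hlam : lam = ((r₁:ℝ) + r₂) + (((n₁-r₁ : ℕ):ℝ)+((n₂-r₂ : ℕ):ℝ)) * (1 - 1/p) := by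
    rw [hhom, hm]
    have e1 : ((n₁:ℝ)) = (r₁:ℝ) + ((n₁ - r₁ : ℕ):ℝ) := by
      have : n₁ = r₁ + (n₁ - r₁) := by omega
      exact_mod_cast this
    have e2 : ((n₂:ℝ)) = (r₂:ℝ) + ((n₂ - r₂ : ℕ):ℝ) := by
      have : n₂ = r₂ + (n₂ - r₂) := by omega
      exact_mod_cast this
    rw [e1, e2]
    push_cast
    field_simp
    ring
  -- the left side is infinite
  set T : Set (E r₁ × E r₂) :=
    Metric.closedBall 0 (1/4) ×ˢ Metric.closedBall 0 (1/4) with hT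
  have hTmeas : MeasurableSet T := measurableSet_closedBall.prod measurableSet_closedBall
  have hTvol : volume T ≠ 0 := by
    rw [hT, Measure.volume_eq_prod, Measure.prod_prod]
    exact (ENNReal.mul_pos (Metric.measure_closedBall_pos volume _ (by norm_num)).ne'
      (Metric.measure_closedBall_pos volume _ (by norm_num)).ne').ne'
  have htop : (∫⁻ x : E r₁ × E r₂, (∫⁻ y₁ : E r₁ × E (n₁ - r₁), ∫⁻ y₂ : E r₂ × E (n₂ - r₂),
      ENNReal.ofReal |Stmt19.f r₁ (n₁ - r₁) p y₁| * ENNReal.ofReal |Stmt19.f r₂ (n₂ - r₂) p y₂| *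
      ENNReal.ofReal ((‖x.1 - y₁.1‖ + ‖y₁.2‖ + ‖x.2 - y₂.1‖ + ‖y₂.2‖) ^ (-lam))
      ∂volume ∂volume) ^ p ∂volume) = ⊤ := by
    rw [← top_le_iff]
    calc (⊤:ℝ≥0∞) = ⊤ * volume T := (ENNReal.top_mul hTvol).symm
      _ = ∫⁻ _ in T, ⊤ ∂volume := (setLIntegral_const T ⊤).symm
      _ ≤ ∫⁻ x in T, (∫⁻ y₁ : E r₁ × E (n₁ - r₁), ∫⁻ y₂ : E r₂ × E (n₂ - r₂),
            ENNReal.ofReal |Stmt19.f r₁ (n₁ - r₁) p y₁| * ENNReal.ofReal |Stmt19.f r₂ (n₂ - r₂) p y₂| *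
            ENNReal.ofReal ((‖x.1 - y₁.1‖ + ‖y₁.2‖ + ‖x.2 - y₂.1‖ + ‖y₂.2‖) ^ (-lam))
            ∂volume ∂volume) ^ p ∂volume := by
          refine setLIntegral_mono' hTmeas fun x hx => ?_
          rw [hT, Set.mem_prod] at hx
          have hx1 : ‖x.1‖ ≤ 1/4 := by
            simpa [Metric.mem_closedBall, dist_zero_right] using hx.1
          have hx2 : ‖x.2‖ ≤ 1/4 := by
            simpa [Metric.mem_closedBall, dist_zero_right] using hx.2
          rw [Stmt19.inner_eq_top r₁ r₂ (n₁ - r₁) (n₂ - r₂) h₁ h₂ ha hb hp hlam x hx1 hx2,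
            ENNReal.top_rpow_of_pos hp0]
      _ ≤ _ := setLIntegral_le_lintegral _ _
  rw [htop, ENNReal.top_rpow_of_pos (by positivity : (0:ℝ) < 1/p), top_le_iff] at hineq
  have hfin : ENNReal.ofReal C * eLpNorm (Stmt19.f r₁ (n₁ - r₁) p) (ENNReal.ofReal p) volume *
      eLpNorm (Stmt19.f r₂ (n₂ - r₂) p) (ENNReal.ofReal p) volume < ⊤ :=
    ENNReal.mul_lt_top (ENNReal.mul_lt_top ENNReal.ofReal_lt_top hmem₁.2) hmem₂.2
  exact hfin.ne hineq
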